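/- Let x* be the unique minimizer of Γ over (ℓ, u). Then for every x ∈ (ℓ, u), Γ(x) - Γ(x*) ≥ (4/(u-ℓ)²)·(x - x*)². In particular, if Γ(x) - Γ(x*) ≤ ε for some ε > 0, then |x - x*| ≤ ((u-ℓ)/2)·√ε. -/

import Mathlib

/-!
Up to the order of its terms, `Γ` is the log barrier `-log (x - a) - log (b - x)` of `(ℓ, u)` plus
the log barrier of the wider interval `(min (-Δ) x_L, max Δ x_R)`, which is convex on `(ℓ, u)`.
The barrier of `(a, b)` has second derivative `(x - a)⁻² + (b - x)⁻² ≥ 8 / (b - a)²`, so `Γ` is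
`8 / (u - ℓ)²`-strongly convex on `(ℓ, u)`, and a strongly convex function exceeds its minimum by
at least half its modulus times the squared distance to the minimizer.
-/

open Real Set Filter Topology

section QuadraticGrowth

variable {E : Type*} [NormedAddCommGroup E] [NormedSpace ℝ E] {s : Set E} {f : E → ℝ} {x₀ x : E}

lemma UniformConvexOn.le_sub_of_isMinOn {φ : ℝ → ℝ} (hf : UniformConvexOn s φ f)
    (hmin : IsMinOn f s x₀) (hx₀ : x₀ ∈ s) (hx : x ∈ s) : φ ‖x - x₀‖ ≤ f x - f x₀ := by
  have hscaled : ∀ t ∈ Ioo (0 : ℝ) 1, t * φ ‖x - x₀‖ ≤ f x - f x₀ := by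
    rintro t ⟨ht₀, ht₁⟩
    have hmix := hf.2 hx hx₀ (sub_pos.2 ht₁).le ht₀.le (sub_add_cancel 1 t)
    have hx₀_le := hmin (hf.1 hx hx₀ (sub_pos.2 ht₁).le ht₀.le (sub_add_cancel 1 t))
    simp only [smul_eq_mul, mem_ofPred_eq] at hmix hx₀_le
    have : (1 - t) * (t * φ ‖x - x₀‖) ≤ (1 - t) * (f x - f x₀) := by linarith
    exact le_of_mul_le_mul_left this (sub_pos.2 ht₁)
  have hlim : Tendsto (fun t : ℝ => t * φ ‖x - x₀‖) (𝓝[<] 1) (𝓝 (1 * φ ‖x - x₀‖)) :=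
    (tendsto_id.mul_const _).mono_left nhdsWithin_le_nhds
  simpa using le_of_tendsto hlim (eventually_of_mem (Ioo_mem_nhdsLT one_pos) hscaled)

lemma StrongConvexOn.le_sub_of_isMinOn {m : ℝ} (hf : StrongConvexOn s m f)
    (hmin : IsMinOn f s x₀) (hx₀ : x₀ ∈ s) (hx : x ∈ s) : m / 2 * ‖x - x₀‖ ^ 2 ≤ f x - f x₀ :=
  UniformConvexOn.le_sub_of_isMinOn hf hmin hx₀ hx

end QuadraticGrowth

lemma strongConvexOn_of_hasDerivWithinAt2_ge {D : Set ℝ} (hD : Convex ℝ D) {f f' f'' : ℝ → ℝ}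
    {m : ℝ} (hf : ContinuousOn f D)
    (hf' : ∀ x ∈ interior D, HasDerivWithinAt f (f' x) (interior D) x)
    (hf'' : ∀ x ∈ interior D, HasDerivWithinAt f' (f'' x) (interior D) x)
    (hm : ∀ x ∈ interior D, m ≤ f'' x) : StrongConvexOn D m f := by
  rw [strongConvexOn_iff_convex]
  refine convexOn_of_hasDerivWithinAt2_nonneg hD (f' := fun x => f' x - m * x)
    (f'' := fun x => f'' x - m) (hf.sub (by fun_prop)) (fun x hx => ?_) (fun x hx => ?_)
    (fun x hx => sub_nonneg.2 (hm x hx))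
  · have hsq : HasDerivWithinAt (fun y : ℝ => m / 2 * ‖y‖ ^ 2) (m * x) (interior D) x := by
      simp only [Real.norm_eq_abs, sq_abs]
      exact ((hasDerivAt_pow 2 x).const_mul (m / 2)).hasDerivWithinAt.congr_deriv (by ring)
    exact (hf' x hx).sub hsq
  · have hlin : HasDerivWithinAt (fun y : ℝ => m * y) m (interior D) x := by
      simpa using (hasDerivWithinAt_id x (interior D)).const_mul m
    exact (hf'' x hx).sub hlin

lemma eight_div_add_sq_le_inv_sq_add_inv_sq {p q : ℝ} (hp : 0 < p) (hq : 0 < q) :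
    8 / (p + q) ^ 2 ≤ (p ^ 2)⁻¹ + (q ^ 2)⁻¹ := by
  calc 8 / (p + q) ^ 2 ≤ 8 / (4 * (p * q)) :=
        div_le_div_of_nonneg_left (by norm_num) (by positivity) (by nlinarith [sq_nonneg (p - q)])
    _ = 2 * p⁻¹ * q⁻¹ := by field_simp; ring
    _ ≤ (p ^ 2)⁻¹ + (q ^ 2)⁻¹ := by rw [← inv_pow, ← inv_pow]; nlinarith [sq_nonneg (p⁻¹ - q⁻¹)]

noncomputable def logBarrier (a b x : ℝ) : ℝ := -log (x - a) - log (b - x)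

section LogBarrier

variable {a b x : ℝ}

lemma hasDerivAt_logBarrier (hx : x ∈ Ioo a b) :
    HasDerivAt (logBarrier a b) (-(x - a)⁻¹ + (b - x)⁻¹) x := by
  have hleft : HasDerivAt (fun y => log (y - a)) (x - a)⁻¹ x := by
    simpa using ((hasDerivAt_id x).sub_const a).log (sub_pos.2 hx.1).ne'
  have hright : HasDerivAt (fun y => log (b - y)) (-(b - x)⁻¹) x := by
    simpa [neg_div] using ((hasDerivAt_id x).const_sub b).log (sub_pos.2 hx.2).ne'
  exact (hleft.neg.sub hright).congr_deriv (by ring)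

lemma hasDerivAt_neg_inv_sub_add_inv_sub (hx : x ∈ Ioo a b) :
    HasDerivAt (fun y => -(y - a)⁻¹ + (b - y)⁻¹) (((x - a) ^ 2)⁻¹ + ((b - x) ^ 2)⁻¹) x := by
  have hleft : HasDerivAt (fun y => (y - a)⁻¹) (-1 / (x - a) ^ 2) x :=
    ((hasDerivAt_id x).sub_const a).inv (sub_pos.2 hx.1).ne'
  have hright : HasDerivAt (fun y => (b - y)⁻¹) (-(-1) / (b - x) ^ 2) x :=
    ((hasDerivAt_id x).const_sub b).inv (sub_pos.2 hx.2).ne'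
  exact (hleft.neg.add hright).congr_deriv (by ring)

lemma strongConvexOn_logBarrier (a b : ℝ) :
    StrongConvexOn (Ioo a b) (8 / (b - a) ^ 2) (logBarrier a b) := by
  refine strongConvexOn_of_hasDerivWithinAt2_ge (convex_Ioo a b)
    (f' := fun y => -(y - a)⁻¹ + (b - y)⁻¹) (f'' := fun y => ((y - a) ^ 2)⁻¹ + ((b - y) ^ 2)⁻¹)
    (fun x hx => (hasDerivAt_logBarrier hx).continuousAt.continuousWithinAt) ?_ ?_ ?_ <;>
    rw [interior_Ioo]
  · exact fun x hx => (hasDerivAt_logBarrier hx).hasDerivWithinAt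
  · exact fun x hx => (hasDerivAt_neg_inv_sub_add_inv_sub hx).hasDerivWithinAt
  · intro x hx
    simpa using eight_div_add_sq_le_inv_sq_add_inv_sq (sub_pos.2 hx.1) (sub_pos.2 hx.2)

lemma logBarrier_max_min_add_logBarrier_min_max (a a' b b' x : ℝ) :
    logBarrier (max a a') (min b b') x + logBarrier (min a a') (max b b') x =
      logBarrier a b x + logBarrier a' b' x := by
  rcases le_total a a' with ha | ha <;> rcases le_total b b' with hb | hb <;>
    simp only [max_eq_left, max_eq_right, min_eq_left, min_eq_right, ha, hb, logBarrier] <;> ring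

end LogBarrier

theorem stmt_11_general (xL xR Δ : ℝ) (ℓ u : ℝ)
    (hℓ : ℓ = max (-Δ) xL) (hu : u = min Δ xR)
    (Γ : ℝ → ℝ)
    (hΓ : ∀ x, Γ x = -Real.log (x - xL) - Real.log (xR - x)
      - Real.log (Δ + x) - Real.log (Δ - x))
    (xstar : ℝ) (hmem : xstar ∈ Set.Ioo ℓ u) (hmin : IsMinOn Γ (Set.Ioo ℓ u) xstar) :
    (∀ x ∈ Set.Ioo ℓ u, (4 / (u - ℓ) ^ 2) * (x - xstar) ^ 2 ≤ Γ x - Γ xstar) ∧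
    (∀ ε > (0 : ℝ), ∀ x ∈ Set.Ioo ℓ u, Γ x - Γ xstar ≤ ε →
      |x - xstar| ≤ ((u - ℓ) / 2) * Real.sqrt ε) := by
  have hΓ_eq : Γ = logBarrier ℓ u + logBarrier (min (-Δ) xL) (max Δ xR) := by
    funext x
    rw [hΓ, Pi.add_apply, hℓ, hu, logBarrier_max_min_add_logBarrier_min_max, logBarrier,
      logBarrier, sub_neg_eq_add, add_comm x]
    ring
  have hΓ_conv : StrongConvexOn (Ioo ℓ u) (8 / (u - ℓ) ^ 2) Γ := by
    have hrest : ConvexOn ℝ (Ioo ℓ u) (logBarrier (min (-Δ) xL) (max Δ xR)) :=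
      ((strongConvexOn_logBarrier _ _).convexOn fun _ => by positivity).subset
        (Ioo_subset_Ioo (hℓ ▸ min_le_max) (hu ▸ min_le_max)) (convex_Ioo ℓ u)
    have hsum := UniformConvexOn.add (strongConvexOn_logBarrier ℓ u) hrest.uniformConvexOn_zero
    rw [add_zero] at hsum
    rwa [hΓ_eq]
  have hgrowth : ∀ x ∈ Ioo ℓ u, 4 / (u - ℓ) ^ 2 * (x - xstar) ^ 2 ≤ Γ x - Γ xstar := by
    intro x hx
    convert hΓ_conv.le_sub_of_isMinOn hmin hmem hx using 1
    rw [Real.norm_eq_abs, sq_abs]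
    ring
  refine ⟨hgrowth, fun ε _ x hx hle => ?_⟩
  have hℓu : 0 < u - ℓ := sub_pos.2 (hx.1.trans hx.2)
  have hsq : (x - xstar) ^ 2 ≤ ((u - ℓ) / 2) ^ 2 * ε := by
    have := (hgrowth x hx).trans hle
    rw [div_mul_eq_mul_div, div_le_iff₀ (by positivity)] at this
    linarith
  calc |x - xstar| ≤ √(((u - ℓ) / 2) ^ 2 * ε) := abs_le_sqrt hsq
    _ = (u - ℓ) / 2 * √ε := by rw [sqrt_mul (by positivity), sqrt_sq (by positivity)]

/-- With `x*` the unique minimizer of `Γ` over `(ℓ, u)`, for every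
`x ∈ (ℓ, u)` we have `Γ(x) - Γ(x*) ≥ (4/(u-ℓ)²)·(x-x*)²`; in particular, if
`Γ(x) - Γ(x*) ≤ ε` for some `ε > 0`, then `|x - x*| ≤ ((u-ℓ)/2)·√ε`. -/
theorem stmt_11 (xL xR Δ : ℝ) (hΔ : 0 < Δ) (ℓ u : ℝ)
    (hℓ : ℓ = max (-Δ) xL) (hu : u = min Δ xR) (hℓu : ℓ < u)
    (Γ : ℝ → ℝ)
    (hΓ : ∀ x, Γ x = -Real.log (x - xL) - Real.log (xR - x)
      - Real.log (Δ + x) - Real.log (Δ - x))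
    (xstar : ℝ) (hmem : xstar ∈ Set.Ioo ℓ u) (hmin : IsMinOn Γ (Set.Ioo ℓ u) xstar) :
    (∀ x ∈ Set.Ioo ℓ u, (4 / (u - ℓ) ^ 2) * (x - xstar) ^ 2 ≤ Γ x - Γ xstar) ∧
    (∀ ε > (0 : ℝ), ∀ x ∈ Set.Ioo ℓ u, Γ x - Γ xstar ≤ ε →
      |x - xstar| ≤ ((u - ℓ) / 2) * Real.sqrt ε) :=
  stmt_11_general xL xR Δ ℓ u hℓ hu Γ hΓ xstar hmem hmin
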